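/- Define ρ = (4/3)^(1/4), b(0) = b(1) = 1, b(k) = ((k−1)! ρ)^(1/(k−1)) for k ≥ 2, and φ(l, d) = ρ^(l−2)·b(l − d + 2) for integers l ≥ d ≥ 1. Then for all integers n ≥ 2, l ≥ d ≥ 1: φ(l, d)·b(n + d) ≥ ρ^(l−1)·b(n + l). -/
import Mathlib

noncomputable def rho : ℝ := (4/3 : ℝ) ^ ((1 : ℝ)/4)

noncomputable def b : ℕ → ℝ
  | 0 => 1
  | 1 => 1
  | (k+2) => (((k+1).factorial : ℝ) * rho) ^ ((1 : ℝ)/(k+1))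

lemma rho_pos : 0 < rho := Real.rpow_pos_of_pos (by norm_num) _

lemma log_rho : Real.log rho = (1/4) * Real.log (4/3) := by
  unfold rho; rw [Real.log_rpow (by norm_num)]

lemma log_rho_nonneg : 0 ≤ Real.log rho := by
  rw [log_rho]
  have : (0:ℝ) ≤ Real.log (4/3) := Real.log_nonneg (by norm_num)
  linarith

lemma log_rho_le : Real.log rho ≤ 1/12 := by
  rw [log_rho]
  have := Real.log_le_sub_one_of_pos (x := 4/3) (by norm_num)
  linarith

/-- f a = (log a! + log rho)/a, the log of b (a+1) for a ≥ 1. -/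
noncomputable def f (a : ℕ) : ℝ := (Real.log (a.factorial) + Real.log rho) / a

lemma b_pos : ∀ k, 0 < b k
  | 0 => one_pos
  | 1 => one_pos
  | (k+2) => Real.rpow_pos_of_pos (mul_pos (by positivity) rho_pos) _

lemma log_b (k : ℕ) (hk : 1 ≤ k) : Real.log (b (k+1)) = f k := by
  obtain ⟨j, rfl⟩ := Nat.exists_eq_add_of_le' hk
  show Real.log ((((j+1).factorial : ℝ) * rho) ^ ((1:ℝ)/(j+1))) = _
  rw [Real.log_rpow (mul_pos (by positivity) rho_pos),
      Real.log_mul (by positivity) (ne_of_gt rho_pos), f]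
  push_cast
  ring_nf

lemma log_factorial_le (a : ℕ) :
    Real.log (a.factorial) ≤ (a+1) * Real.log (a+1) - a := by
  induction a with
  | zero => simp
  | succ a ih =>
    have h1 : ((a:ℝ)+1) > 0 := by positivity
    have h2 : ((a:ℝ)+2) > 0 := by positivity
    have hlog : Real.log ((a+1).factorial) = Real.log (a+1) + Real.log (a.factorial) := by
      rw [Nat.factorial_succ]
      push_cast
      rw [Real.log_mul (by positivity) (by positivity)]
    have key : 1 - ((a:ℝ)+1)/((a:ℝ)+2) ≤ Real.log ((a+2)/(a+1)) := by
      have := Real.one_sub_inv_le_log_of_pos (x := ((a:ℝ)+2)/((a:ℝ)+1)) (by positivity)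
      have hinv : (((a:ℝ)+2)/((a:ℝ)+1))⁻¹ = ((a:ℝ)+1)/((a:ℝ)+2) := by
        field_simp
      rwa [hinv] at this
    have hsplit : Real.log (((a:ℝ)+2)/((a:ℝ)+1)) = Real.log ((a:ℝ)+2) - Real.log ((a:ℝ)+1) := by
      rw [Real.log_div (by positivity) (by positivity)]
    have hq : 1 - ((a:ℝ)+1)/((a:ℝ)+2) = 1/((a:ℝ)+2) := by
      field_simp
      norm_num
    rw [hsplit, hq] at key
    -- key : 1/(a+2) ≤ log(a+2) - log(a+1)
    have key2 : 1 ≤ ((a:ℝ)+2) * Real.log ((a:ℝ)+2) - ((a:ℝ)+2) * Real.log ((a:ℝ)+1) := by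
      have := (div_le_iff₀ h2).mp (by linarith [key] : 1/((a:ℝ)+2) ≤ Real.log ((a:ℝ)+2) - Real.log ((a:ℝ)+1))
      nlinarith [this]
    push_cast [hlog]
    have e2 : ((a:ℝ)+1+1) = ((a:ℝ)+2) := by ring
    rw [e2]
    nlinarith [key2, ih]

lemma log_le_aux (x : ℝ) (hx : 0 < x) : Real.log x ≤ x/4 + Real.log 4 - 1 := by
  have h := Real.log_le_sub_one_of_pos (x := x/4) (by positivity)
  have : Real.log (x/4) = Real.log x - Real.log 4 := Real.log_div (ne_of_gt hx) (by norm_num)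
  linarith

/-- Key concavity inequality. -/
lemma key_ineq (a : ℕ) (ha : 1 ≤ a) :
    (a:ℝ) * (a+1) * Real.log (a+2) + 2 * Real.log (a.factorial) + 2 * Real.log rho
      ≤ (a:ℝ) * (a+3) * Real.log (a+1) := by
  have hC := log_rho_le
  have hC0 := log_rho_nonneg
  match a, ha with
  | 1, _ =>
    -- 2 log 3 + 0 + 2C ≤ 4 log 2;  C = (1/4) log(4/3) = (1/4)(2 log 2 - log 3)
    have h43 : Real.log (4/3 : ℝ) = 2 * Real.log 2 - Real.log 3 := by
      rw [Real.log_div (by norm_num) (by norm_num)]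
      rw [show (4:ℝ) = 2^2 by norm_num, Real.log_pow]
      push_cast; ring
    have h23 : Real.log 3 ≤ 2 * Real.log 2 := by
      have := Real.log_le_log (by norm_num : (0:ℝ) < 3) (by norm_num : (3:ℝ) ≤ 4)
      rw [show (4:ℝ) = 2^2 by norm_num, Real.log_pow] at this
      push_cast at this; linarith
    rw [log_rho, h43]
    norm_num [Nat.factorial]
    linarith
  | 2, _ =>
    -- 6 log 4 + 2 log 2 + 2C ≤ 10 log 3, C = (1/4)(2 log 2 - log 3)
    -- ⟺ 15 log 2 ≤ 10.5 log 3 ⟺ 2^30 ≤ 3^21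
    have h43 : Real.log (4/3 : ℝ) = 2 * Real.log 2 - Real.log 3 := by
      rw [Real.log_div (by norm_num) (by norm_num)]
      rw [show (4:ℝ) = 2^2 by norm_num, Real.log_pow]
      push_cast; ring
    have h4 : Real.log 4 = 2 * Real.log 2 := by
      rw [show (4:ℝ) = 2^2 by norm_num, Real.log_pow]; push_cast; ring
    have hp : 30 * Real.log 2 ≤ 21 * Real.log 3 := by
      have := Real.log_le_log (by positivity : (0:ℝ) < 2^30)
        (by norm_num : (2:ℝ)^30 ≤ 3^21)
      rw [Real.log_pow, Real.log_pow] at this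
      push_cast at this; linarith
    rw [log_rho, h43]
    norm_num [Nat.factorial]
    rw [h4]
    linarith
  | (m+3), _ =>
    set a : ℕ := m + 3 with hadef
    have ha3 : (3:ℝ) ≤ (a:ℝ) := by push_cast [hadef]; linarith
    have h1 : (0:ℝ) < (a:ℝ)+1 := by positivity
    -- step 1: log(a+2) ≤ log(a+1) + 1/(a+1)
    have s1 : Real.log ((a:ℝ)+2) ≤ Real.log ((a:ℝ)+1) + 1/((a:ℝ)+1) := by
      have h := Real.log_le_sub_one_of_pos (x := ((a:ℝ)+2)/((a:ℝ)+1)) (by positivity)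
      have hd : Real.log (((a:ℝ)+2)/((a:ℝ)+1)) = Real.log ((a:ℝ)+2) - Real.log ((a:ℝ)+1) :=
        Real.log_div (by positivity) (by positivity)
      have hq : ((a:ℝ)+2)/((a:ℝ)+1) - 1 = 1/((a:ℝ)+1) := by
        field_simp
        norm_num
      rw [hd, hq] at h
      linarith
    -- step 2: log a! ≤ (a+1) log(a+1) - a
    have s2 := log_factorial_le a
    -- step 3: 2 log(a+1) + 2C ≤ a
    have s3 : 2 * Real.log ((a:ℝ)+1) + 2 * Real.log rho ≤ (a:ℝ) := by
      have h := log_le_aux ((a:ℝ)+1) (by positivity)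
      have h2 : Real.log 2 ≤ 0.6931471808 := le_of_lt Real.log_two_lt_d9
      have h4 : Real.log 4 = 2 * Real.log 2 := by
        rw [show (4:ℝ) = 2^2 by norm_num, Real.log_pow]; push_cast; ring
      nlinarith
    have hla1 : 0 ≤ Real.log ((a:ℝ)+1) := Real.log_nonneg (by linarith)
    have s1m : (a:ℝ)*((a:ℝ)+1)*Real.log ((a:ℝ)+2) ≤ (a:ℝ)*((a:ℝ)+1)*Real.log ((a:ℝ)+1) + a := by
      nlinarith [s1, Real.log_nonneg (by linarith : (1:ℝ) ≤ (a:ℝ)+2), h1,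
        mul_le_mul_of_nonneg_left s1 (by positivity : (0:ℝ) ≤ (a:ℝ)*((a:ℝ)+1)),
        (by field_simp : (a:ℝ)*((a:ℝ)+1)*(1/((a:ℝ)+1)) = (a:ℝ))]
    nlinarith [s1m, s2, s3]

noncomputable def D (a : ℕ) : ℝ := f (a+1) - f a

lemma D_antitone (a : ℕ) (ha : 1 ≤ a) : D (a+1) ≤ D a := by
  obtain ⟨m, rfl⟩ := Nat.exists_eq_add_of_le ha
  set a := 1 + m with hadef
  have ha1 : (0:ℝ) < (a:ℝ) := by push_cast [hadef]; linarith
  have ha2 : (0:ℝ) < (a:ℝ)+1 := by linarith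
  have ha3 : (0:ℝ) < (a:ℝ)+2 := by linarith
  have key := key_ineq a (by omega)
  have hf1 : Real.log ((a+1).factorial) = Real.log ((a:ℝ)+1) + Real.log (a.factorial) := by
    rw [Nat.factorial_succ]; push_cast
    rw [Real.log_mul (by positivity) (by positivity)]
  have hf2 : Real.log ((a+2).factorial) =
      Real.log ((a:ℝ)+2) + Real.log ((a:ℝ)+1) + Real.log (a.factorial) := by
    rw [show a + 2 = (a+1) + 1 from rfl, Nat.factorial_succ]
    push_cast
    rw [Real.log_mul (by positivity) (by positivity), hf1]
    push_cast; ring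
  unfold D f
  push_cast [hf1, hf2]
  rw [div_sub_div _ _ (by positivity) (by positivity),
      div_sub_div _ _ (by positivity) (by positivity),
      div_le_div_iff₀ (by positivity) (by positivity)]
  nlinarith [key]

lemma D_mono (i j : ℕ) (hi : 1 ≤ i) (hij : i ≤ j) : D j ≤ D i := by
  induction j with
  | zero => omega
  | succ j ih =>
    rcases Nat.lt_or_ge i (j+1) with h | h
    · exact le_trans (D_antitone j (by omega)) (ih (by omega))
    · have : i = j + 1 := by omega
      rw [this]

lemma f_superadd (t c : ℕ) (hc : 1 ≤ c) : f 1 + f (t + c) ≤ f (t+1) + f c := by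
  induction t with
  | zero => simp
  | succ t ih =>
    have hD : D (t + c) ≤ D (t + 1) := D_mono (t+1) (t+c) (by omega) (by omega)
    have e1 : f (t+1+1) = f (t+1) + D (t+1) := by unfold D; ring
    have e2 : f (t+1+c) = f (t+c) + D (t+c) := by
      unfold D; rw [show t+1+c = (t+c)+1 by omega]; ring
    rw [e1, e2]
    linarith

/-- Core lemma: rho * b (a+c) ≤ b (a+1) * b (c+1) for a, c ≥ 1. -/
lemma core (a c : ℕ) (ha : 1 ≤ a) (hc : 1 ≤ c) :
    rho * b (a + c) ≤ b (a+1) * b (c+1) := by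
  have hac : a + c = (a + c - 1) + 1 := by omega
  have hlog : Real.log (rho * b (a+c)) ≤ Real.log (b (a+1) * b (c+1)) := by
    rw [Real.log_mul (ne_of_gt rho_pos) (ne_of_gt (b_pos _)),
        Real.log_mul (ne_of_gt (b_pos _)) (ne_of_gt (b_pos _)),
        hac, log_b _ (by omega), log_b _ ha, log_b _ hc]
    have h1 : Real.log rho = f 1 := by
      unfold f; simp [Nat.factorial]
    rw [h1]
    have := f_superadd (a - 1) c hc
    rw [show a - 1 + c = a + c - 1 by omega, show a - 1 + 1 = a by omega] at this
    exact this
  exact (Real.log_le_log_iff (mul_pos rho_pos (b_pos _)) (mul_pos (b_pos _) (b_pos _))).mp hlog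

theorem phi_bound (n l d : ℕ) (hn : 2 ≤ n) (hd : 1 ≤ d) (hdl : d ≤ l) :
    rho ^ ((l : ℤ) - 1) * b (n + l) ≤ rho ^ ((l : ℤ) - 2) * b (l - d + 2) * b (n + d) := by
  have hcore := core (l - d + 1) (n + d - 1) (by omega) (by omega)
  rw [show l - d + 1 + (n + d - 1) = n + l by omega,
      show l - d + 1 + 1 = l - d + 2 by omega,
      show n + d - 1 + 1 = n + d by omega] at hcore
  have hz : rho ^ ((l:ℤ) - 1) = rho ^ ((l:ℤ) - 2) * rho := by
    rw [← zpow_add_one₀ (ne_of_gt rho_pos)]; ring_nf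
  rw [hz]
  have hp : (0:ℝ) < rho ^ ((l:ℤ) - 2) := zpow_pos rho_pos _
  calc rho ^ ((l:ℤ) - 2) * rho * b (n + l)
      = rho ^ ((l:ℤ) - 2) * (rho * b (n + l)) := by ring
    _ ≤ rho ^ ((l:ℤ) - 2) * (b (l - d + 2) * b (n + d)) := by
        exact mul_le_mul_of_nonneg_left hcore (le_of_lt hp)
    _ = rho ^ ((l:ℤ) - 2) * b (l - d + 2) * b (n + d) := by ring
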